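/- Let $V$ be a real Hilbert space, $a$ a bounded, coercive ($a(v,v)\ge m\|v\|^2$, $m>0$), symmetric bilinear form, and for each $\eta\in V$ let $j(\eta,\cdot):V\to\mathbb{R}$ be a continuous seminorm, with the exchange bound $j(\eta_1,v_2)-j(\eta_1,v_1)+j(\eta_2,v_1)-j(\eta_2,v_2)\le\alpha\|\eta_1-\eta_2\|\|v_1-v_2\|$ and $\alpha<m$. For fixed $f\in V$ and each $\eta\in V$, let $S(\eta)$ denote the unique solution of the (linear-convex) variational inequality $a(u,v-u)+j(\eta,v)-j(\eta,u)\ge\langle f,v-u\rangle$ for all $v\in V$ (existence and uniqueness are assumed). Then $S:V\to V$ satisfies $\|S(\eta_1)-S(\eta_2)\|\le\frac{\alpha}{m}\|\eta_1-\eta_2\|$; in particular $S$ is a contraction and has a unique fixed point, which is the unique solution of the quasivariational inequality $a(u,v-u)+j(u,v)-j(u,u)\ge\langle f,v-u\rangle$ for all $v\in V$. -/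

import Mathlib

/-!
Testing the variational inequality for `S η₁` with `v = S η₂` and the one for `S η₂` with
`v = S η₁` and adding, the linear terms cancel and what remains is
`a (S η₁ - S η₂) (S η₁ - S η₂) ≤ j η₁ (S η₂) - j η₁ (S η₁) + j η₂ (S η₁) - j η₂ (S η₂)`.
Coercivity and the exchange bound turn this into `m ‖S η₁ - S η₂‖ ≤ α ‖η₁ - η₂‖`, so `S` is a
contraction of the complete space `V`; its unique fixed point is the unique solution of the
quasivariational inequality, because the fixed points of `S` are exactly those solutions.
-/

open RealInnerProductSpace

lemma le_div_of_mul_sq_le_mul {m c x : ℝ} (hm : 0 < m) (hc : 0 ≤ c) (hx : 0 ≤ x)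
    (h : m * x ^ 2 ≤ c * x) : x ≤ c / m := by
  rw [le_div_iff₀ hm]
  rcases hx.eq_or_lt with rfl | hx
  · simpa using hc
  · nlinarith

lemma existsUnique_fixedPoint_of_norm_sub_le {V : Type*} [NormedAddCommGroup V] [CompleteSpace V]
    {S : V → V} {K : ℝ} (hK : K < 1) (hS : ∀ x y, ‖S x - S y‖ ≤ K * ‖x - y‖) :
    ∃! u, S u = u := by
  have hC : ContractingWith K.toNNReal S :=
    ⟨Real.toNNReal_lt_one.2 hK, LipschitzWith.of_dist_le' fun x y => by
      simpa only [dist_eq_norm] using hS x y⟩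
  exact ⟨hC.fixedPoint S, hC.fixedPoint_isFixedPt, fun _ hy => hC.fixedPoint_unique hy⟩

section VariationalInequality

variable {V : Type*} [NormedAddCommGroup V] [NormedSpace ℝ V]

def IsVariationalSolution (a : V →ₗ[ℝ] V →ₗ[ℝ] ℝ) (ℓ : V →ₗ[ℝ] ℝ) (φ : V → ℝ) (u : V) : Prop :=
  ∀ v, ℓ (v - u) ≤ a u (v - u) + φ v - φ u

variable {a : V →ₗ[ℝ] V →ₗ[ℝ] ℝ} {ℓ : V →ₗ[ℝ] ℝ}

lemma IsVariationalSolution.apply_sub_sub_le {φ₁ φ₂ : V → ℝ} {u₁ u₂ : V}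
    (h₁ : IsVariationalSolution a ℓ φ₁ u₁) (h₂ : IsVariationalSolution a ℓ φ₂ u₂) :
    a (u₁ - u₂) (u₁ - u₂) ≤ φ₁ u₂ - φ₁ u₁ + φ₂ u₁ - φ₂ u₂ := by
  have h₁₂ := h₁ u₂
  have h₂₁ := h₂ u₁
  have hℓ : ℓ (u₂ - u₁) + ℓ (u₁ - u₂) = 0 := by rw [← map_add]; simp
  simp only [map_sub, LinearMap.sub_apply] at h₁₂ h₂₁ ⊢
  linarith

lemma IsVariationalSolution.norm_sub_le {m α : ℝ} {j : V → V → ℝ} {η₁ η₂ u₁ u₂ : V}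
    (hm : 0 < m) (hα : 0 ≤ α) (hcoer : ∀ v, m * ‖v‖ ^ 2 ≤ a v v)
    (hj : ∀ η₁ η₂ v₁ v₂ : V,
      j η₁ v₂ - j η₁ v₁ + j η₂ v₁ - j η₂ v₂ ≤ α * ‖η₁ - η₂‖ * ‖v₁ - v₂‖)
    (h₁ : IsVariationalSolution a ℓ (j η₁) u₁) (h₂ : IsVariationalSolution a ℓ (j η₂) u₂) :
    ‖u₁ - u₂‖ ≤ α / m * ‖η₁ - η₂‖ := by
  rw [div_mul_eq_mul_div]
  refine le_div_of_mul_sq_le_mul hm (by positivity) (norm_nonneg _) ?_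
  calc m * ‖u₁ - u₂‖ ^ 2 ≤ a (u₁ - u₂) (u₁ - u₂) := hcoer _
    _ ≤ j η₁ u₂ - j η₁ u₁ + j η₂ u₁ - j η₂ u₂ := h₁.apply_sub_sub_le h₂
    _ ≤ α * ‖η₁ - η₂‖ * ‖u₁ - u₂‖ := hj _ _ _ _

lemma isVariationalSolution_iff_eq {j : V → V → ℝ} {S : V → V}
    (hS : ∀ η, IsVariationalSolution a ℓ (j η) (S η))
    (hSuniq : ∀ η u, IsVariationalSolution a ℓ (j η) u → u = S η) (η u : V) :
    IsVariationalSolution a ℓ (j η) u ↔ u = S η :=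
  ⟨hSuniq η u, fun h => h ▸ hS η⟩

end VariationalInequality

theorem stmt16_general {V : Type*} [NormedAddCommGroup V] [InnerProductSpace ℝ V] [CompleteSpace V]
    (a : V →ₗ[ℝ] V →ₗ[ℝ] ℝ) (m : ℝ)
    (hm : 0 < m) (hcoer : ∀ v : V, m * ‖v‖ ^ 2 ≤ a v v)
    (j : V → V → ℝ)
    (α : ℝ) (hα : 0 ≤ α) (hαm : α < m)
    (hj : ∀ η₁ η₂ v₁ v₂ : V,
      j η₁ v₂ - j η₁ v₁ + j η₂ v₁ - j η₂ v₂ ≤ α * ‖η₁ - η₂‖ * ‖v₁ - v₂‖)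
    (f : V) (S : V → V)
    (hS : ∀ η : V, ∀ v : V,
      a (S η) (v - S η) + j η v - j η (S η) ≥ ⟪f, v - S η⟫)
    (hSuniq : ∀ η u : V,
      (∀ v : V, a u (v - u) + j η v - j η u ≥ ⟪f, v - u⟫) → u = S η) :
    (∀ η₁ η₂ : V, ‖S η₁ - S η₂‖ ≤ (α / m) * ‖η₁ - η₂‖) ∧
      (∃! u : V, S u = u) ∧
      (∃! u : V, ∀ v : V, a u (v - u) + j u v - j u u ≥ ⟪f, v - u⟫) ∧
      (∀ u : V, S u = u ↔ ∀ v : V, a u (v - u) + j u v - j u u ≥ ⟪f, v - u⟫) := by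
  have hlip (η₁ η₂ : V) : ‖S η₁ - S η₂‖ ≤ α / m * ‖η₁ - η₂‖ :=
    IsVariationalSolution.norm_sub_le (ℓ := innerₛₗ ℝ f) hm hα hcoer hj (hS η₁) (hS η₂)
  have hfix (u : V) : S u = u ↔ ∀ v : V, a u (v - u) + j u v - j u u ≥ ⟪f, v - u⟫ :=
    eq_comm.trans (isVariationalSolution_iff_eq (ℓ := innerₛₗ ℝ f) hS hSuniq u u).symm
  obtain ⟨u, hu, huniq⟩ :=
    existsUnique_fixedPoint_of_norm_sub_le ((div_lt_one hm).2 hαm) hlip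
  exact ⟨hlip, ⟨u, hu, huniq⟩,
    ⟨u, (hfix u).1 hu, fun w hw => huniq w ((hfix w).2 hw)⟩, hfix⟩

theorem stmt16 {V : Type*} [NormedAddCommGroup V] [InnerProductSpace ℝ V] [CompleteSpace V]
    (a : V →ₗ[ℝ] V →ₗ[ℝ] ℝ) (M m : ℝ)
    (hsymm : ∀ u v : V, a u v = a v u)
    (hbound : ∀ u v : V, |a u v| ≤ M * ‖u‖ * ‖v‖)
    (hm : 0 < m) (hcoer : ∀ v : V, m * ‖v‖ ^ 2 ≤ a v v)
    (j : V → V → ℝ)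
    (hcont : ∀ η : V, Continuous (j η))
    (hjsmul : ∀ (η : V) (c : ℝ) (v : V), j η (c • v) = |c| * j η v)
    (hjadd : ∀ η v w : V, j η (v + w) ≤ j η v + j η w)
    (α : ℝ) (hα : 0 ≤ α) (hαm : α < m)
    (hj : ∀ η₁ η₂ v₁ v₂ : V,
      j η₁ v₂ - j η₁ v₁ + j η₂ v₁ - j η₂ v₂ ≤ α * ‖η₁ - η₂‖ * ‖v₁ - v₂‖)
    (f : V) (S : V → V)
    (hS : ∀ η : V, ∀ v : V,
      a (S η) (v - S η) + j η v - j η (S η) ≥ ⟪f, v - S η⟫)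
    (hSuniq : ∀ η u : V,
      (∀ v : V, a u (v - u) + j η v - j η u ≥ ⟪f, v - u⟫) → u = S η) :
    (∀ η₁ η₂ : V, ‖S η₁ - S η₂‖ ≤ (α / m) * ‖η₁ - η₂‖) ∧
      (∃! u : V, S u = u) ∧
      (∃! u : V, ∀ v : V, a u (v - u) + j u v - j u u ≥ ⟪f, v - u⟫) ∧
      (∀ u : V, S u = u ↔ ∀ v : V, a u (v - u) + j u v - j u u ≥ ⟪f, v - u⟫) :=
  stmt16_general a m hm hcoer j α hα hαm hj f S hS hSuniq
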